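/- Every (l,t)-cycle is a balanced graph: the lexicographic product of C_l (l = 2 or l ≡ 0 mod 4, l ≥ 8) with the edgeless graph on t vertices is bipartite and has no induced cycle of length ≡ 2 mod 4. -/

import Mathlib

open SimpleGraph in
/-- A closed walk is an induced (chordless) cycle: it is a cycle and every edge of the
graph between vertices of the cycle is an edge of the cycle. -/
def IsInducedCycle {V : Type*} {G : SimpleGraph V} {v : V} (c : G.Walk v v) : Prop :=
  c.IsCycle ∧ ∀ x ∈ c.support, ∀ y ∈ c.support, G.Adj x y → s(x, y) ∈ c.edges

/-- A graph is balanced: bipartite (2-colorable) and every induced cycle has length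
divisible by 4 (equivalently, no induced cycle of length ≡ 2 mod 4). -/
def BalancedGraph {V : Type*} (G : SimpleGraph V) : Prop :=
  G.Colorable 2 ∧ ∀ (v : V) (c : G.Walk v v), IsInducedCycle c → 4 ∣ c.length
/-- The lexicographic product of graphs. -/
def lexProd {α β : Type*} (X : SimpleGraph α) (Y : SimpleGraph β) : SimpleGraph (α × β) where
  Adj p q := X.Adj p.1 q.1 ∨ (p.1 = q.1 ∧ Y.Adj p.2 q.2)
  symm := by
    constructor
    rintro p q (h | ⟨h1, h2⟩)
    · exact Or.inl h.symm
    · exact Or.inr ⟨h1.symm, h2.symm⟩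
  loopless := by
    constructor
    rintro p (h | ⟨_, h2⟩)
    · exact h.ne rfl
    · exact h2.ne rfl

/-- The `(l,t)`-cycle: lexicographic product of the cycle `C_l` with the edgeless
graph on `t` vertices. -/
def ltCycle (l t : ℕ) : SimpleGraph (Fin l × Fin t) :=
  lexProd (SimpleGraph.cycleGraph l) (⊥ : SimpleGraph (Fin t))

/-!
Vertices of `C_l[t]` with the same first coordinate are twins. If an induced cycle contains two
twins, the two cycle-neighbours of one are adjacent to the other, which forces a `4`-cycle.
Otherwise the cycle projects injectively onto `C_l`, and an injective closed walk in `C_l` whose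
steps are all `±1` can only close up after going once around, so its length is `l`. Bipartiteness
is inherited from `C_l`, as `l` is even.
-/

open Function

theorem ZMod.nsmul_eq_zero_of_injective_of_sub_eq_or_eq_neg {A : Type*} [AddCommGroup A]
    {n : ℕ} (hn : 2 < n) {b : ZMod n → A} (hb : Injective b) {d : A}
    (hstep : ∀ k, b (k + 1) - b k = d ∨ b (k + 1) - b k = -d) : n • d = 0 := by
  have : NeZero n := ⟨by omega⟩
  let e : ZMod n → A := fun k => b (k + 1) - b k
  -- A step followed by its opposite would revisit a vertex.
  have hturn : ∀ k, e (k + 1) = e k := by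
    intro k
    by_contra hne
    have hopp : e (k + 1) = -e k := by
      rcases hstep k with h | h <;> rcases hstep (k + 1) with h' | h' <;>
        simp only [e, h, h', neg_neg, not_true_eq_false] at hne ⊢
    have hback : b (k + 1 + 1) = b k := by
      rw [← sub_eq_zero, ← sub_add_sub_cancel _ (b (k + 1))]
      exact (congrArg (· + e k) hopp).trans (neg_add_cancel _)
    have h2 : ((2 : ℕ) : ZMod n) = 0 := by
      push_cast; linear_combination hb hback
    have := Nat.le_of_dvd two_pos ((ZMod.natCast_eq_zero_iff 2 n).mp h2)
    omega
  have hconst : ∀ k, e k = e 0 := by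
    suffices ∀ i : ℕ, e i = e 0 from fun k => by rw [← ZMod.natCast_zmod_val k, this]
    intro i
    induction i with
    | zero => rw [Nat.cast_zero]
    | succ i ih => rw [Nat.cast_succ, hturn, ih]
  have hsum : ∑ k, e k = 0 := by
    simp only [e, Finset.sum_sub_distrib, sub_eq_zero]
    exact Fintype.sum_equiv (Equiv.addRight 1) _ _ (fun _ => rfl)
  rw [Finset.sum_congr rfl (fun k _ => hconst k), Finset.sum_const, Finset.card_univ,
    ZMod.card] at hsum
  rcases hstep 0 with h | h
  · rwa [← h]
  · rwa [← neg_eq_zero, ← smul_neg, ← h]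

namespace SimpleGraph

open Fin.CommRing in
theorem cycleGraph.eq_of_injective_of_adj_add_one {l n : ℕ} (hn : 2 < n)
    {b : ZMod n → Fin l} (hb : Injective b) (hadj : ∀ k, (cycleGraph l).Adj (b k) (b (k + 1))) :
    n = l := by
  have : NeZero n := ⟨by omega⟩
  have hle : n ≤ l := by simpa using Fintype.card_le_of_injective b hb
  obtain _ | _ | m := l
  · omega
  · exact absurd (hadj 0) cycleGraph_one_adj
  · have hsteps : ∀ k, b (k + 1) - b k = 1 ∨ b (k + 1) - b k = -1 := fun k => by
      rcases cycleGraph_adj.mp (hadj k) with h | h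
      · right; rw [← h, neg_sub]
      · left; exact h
    have hdvd := ZMod.nsmul_eq_zero_of_injective_of_sub_eq_or_eq_neg hn hb hsteps
    rw [nsmul_one, Fin.natCast_eq_zero] at hdvd
    exact le_antisymm hle (Nat.le_of_dvd (by omega) hdvd)

variable {V α β : Type*}

theorem lexProd_bot_adj {X : SimpleGraph α} {p q : α × β} :
    (lexProd X (⊥ : SimpleGraph β)).Adj p q ↔ X.Adj p.1 q.1 := by
  simp [lexProd]

theorem Colorable.lexProd_bot {X : SimpleGraph α} {n : ℕ} (h : X.Colorable n) :
    (lexProd X (⊥ : SimpleGraph β)).Colorable n :=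
  h.of_hom ⟨Prod.fst, lexProd_bot_adj.mp⟩

namespace Walk

variable {G : SimpleGraph V} {v : V}

def getCycleVert (c : G.Walk v v) (k : ZMod c.length) : V :=
  c.getVert k.val

theorem getCycleVert_add_one {c : G.Walk v v} (h : 0 < c.length) (k : ZMod c.length) :
    c.getCycleVert (k + 1) = c.getVert (k.val + 1) := by
  have : NeZero c.length := ⟨h.ne'⟩
  have hk : k + 1 = ((k.val + 1 : ℕ) : ZMod c.length) := by
    push_cast [ZMod.natCast_zmod_val]; rfl
  rw [getCycleVert, hk]
  rcases Nat.lt_or_ge (k.val + 1) c.length with hlt | hge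
  · rw [ZMod.val_natCast_of_lt hlt]
  · rw [le_antisymm k.val_lt hge, ZMod.natCast_self, ZMod.val_zero, getVert_zero, getVert_length]

theorem adj_getCycleVert_add_one {c : G.Walk v v} (h : 0 < c.length) (k : ZMod c.length) :
    G.Adj (c.getCycleVert k) (c.getCycleVert (k + 1)) := by
  have : NeZero c.length := ⟨h.ne'⟩
  rw [getCycleVert_add_one h]
  exact c.adj_getVert_succ k.val_lt

theorem IsCycle.injective_getCycleVert {c : G.Walk v v} (hc : c.IsCycle) :
    Injective c.getCycleVert := by
  have : NeZero c.length := ⟨by have := hc.three_le_length; omega⟩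
  have hle : ∀ k : ZMod c.length, k.val ≤ c.length - 1 := fun k => by
    have := k.val_lt; omega
  intro x y hxy
  exact ZMod.val_injective _ (hc.getVert_injOn' (hle x) (hle y) hxy)

theorem mk_mem_edges_iff_exists_getCycleVert {c : G.Walk v v} (h : 0 < c.length) {x y : V} :
    s(x, y) ∈ c.edges ↔ ∃ k, s(c.getCycleVert k, c.getCycleVert (k + 1)) = s(x, y) := by
  have : NeZero c.length := ⟨h.ne'⟩
  rw [mk_mem_edges_iff_exists]
  constructor
  · rintro ⟨i, hi, hxy⟩
    refine ⟨i, ?_⟩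
    rw [getCycleVert_add_one h, getCycleVert, ZMod.val_natCast_of_lt hi, hxy]
  · rintro ⟨k, hxy⟩
    exact ⟨k.val, k.val_lt, by rwa [getCycleVert_add_one h] at hxy⟩

end Walk

end SimpleGraph

open SimpleGraph

section InducedCycle

variable {V : Type*} {G : SimpleGraph V} {v : V}

theorem IsInducedCycle.adj_getCycleVert_iff {c : G.Walk v v} (hc : IsInducedCycle c)
    {x y : ZMod c.length} :
    G.Adj (c.getCycleVert x) (c.getCycleVert y) ↔ y = x + 1 ∨ x = y + 1 := by
  have hlen : 0 < c.length := by have := hc.1.three_le_length; omega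
  have hinj := hc.1.injective_getCycleVert
  constructor
  · intro hadj
    obtain ⟨k, hk⟩ := (c.mk_mem_edges_iff_exists_getCycleVert hlen).mp
      (hc.2 _ (c.getVert_mem_support _) _ (c.getVert_mem_support _) hadj)
    rcases Sym2.eq_iff.mp hk with ⟨hx, hy⟩ | ⟨hy, hx⟩
    · left; rw [← hinj hx, ← hinj hy]
    · right; rw [← hinj hx, ← hinj hy]
  · rintro (rfl | rfl)
    · exact c.adj_getCycleVert_add_one hlen x
    · exact (c.adj_getCycleVert_add_one hlen y).symm

theorem IsInducedCycle.length_eq_four_of_adj_imp_adj {c : G.Walk v v} (hc : IsInducedCycle c)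
    {x y : ZMod c.length} (hxy : x ≠ y)
    (h : ∀ z, G.Adj (c.getCycleVert z) (c.getCycleVert x) →
      G.Adj (c.getCycleVert z) (c.getCycleVert y)) :
    c.length = 4 := by
  -- `y` is adjacent to both `x + 1` and `x - 1`, so `y = x + 2` and `y = x - 2`.
  have hsucc := hc.adj_getCycleVert_iff.mp (h _ (hc.adj_getCycleVert_iff.mpr (.inr rfl)))
  have hpred := hc.adj_getCycleVert_iff.mp
    (h _ (hc.adj_getCycleVert_iff.mpr (.inl (sub_add_cancel x 1).symm)))
  have h4 : ((4 : ℕ) : ZMod c.length) = 0 := by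
    rcases hsucc with hy | hx
    · rcases hpred with hx' | hy'
      · exact absurd (hx'.trans (sub_add_cancel x 1)).symm hxy
      · push_cast; linear_combination -hy' - hy
    · exact absurd (add_right_cancel hx) hxy
  have hdvd := (ZMod.natCast_eq_zero_iff 4 _).mp h4
  have h3 := hc.1.three_le_length
  have h4 := Nat.le_of_dvd four_pos hdvd
  generalize c.length = n at hdvd h3 h4
  interval_cases n <;> omega

theorem IsInducedCycle.length_eq_four_or_injective_fst {α β : Type*} {X : SimpleGraph α}
    {v : α × β} {c : (lexProd X (⊥ : SimpleGraph β)).Walk v v} (hc : IsInducedCycle c) :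
    c.length = 4 ∨ Injective (Prod.fst ∘ c.getCycleVert) := by
  refine or_iff_not_imp_right.mpr fun hinj => ?_
  obtain ⟨x, y, hfst, hxy⟩ : ∃ x y, (c.getCycleVert x).1 = (c.getCycleVert y).1 ∧ x ≠ y := by
    simpa [Injective] using hinj
  exact hc.length_eq_four_of_adj_imp_adj hxy fun z hz =>
    lexProd_bot_adj.mpr (hfst ▸ lexProd_bot_adj.mp hz)

end InducedCycle

theorem ltCycle_balanced_general (l t : ℕ) (hl : l = 2 ∨ (l % 4 = 0 ∧ 8 ≤ l)) :
    BalancedGraph (ltCycle l t) := by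
  unfold ltCycle
  have hl_even : Even l := by
    rcases hl with rfl | ⟨h, -⟩
    · decide
    · exact Nat.even_iff.mpr (by omega)
  refine ⟨by simpa using (cycleGraph.bicoloring_of_even l hl_even).colorable.lexProd_bot,
    fun v c hc => ?_⟩
  have h3 := hc.1.three_le_length
  rcases hc.length_eq_four_or_injective_fst with h4 | hinj
  · omega
  · have hlen := cycleGraph.eq_of_injective_of_adj_add_one (by omega) hinj
      fun k => lexProd_bot_adj.mp (c.adj_getCycleVert_add_one (by omega) k)
    omega

/-- every `(l,t)`-cycle is balanced. -/
theorem ltCycle_balanced (l t : ℕ) (hl : l = 2 ∨ (l % 4 = 0 ∧ 8 ≤ l)) (ht : 0 < t) :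
    BalancedGraph (ltCycle l t) :=
  ltCycle_balanced_general l t hl
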